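/- arXiv:1202.1158 — 3 statements merged into one kernel-verified Lean document; each statement's English description precedes it below -/
import Mathlib

section
/- Local energy bound for the projection (Lemma 3.4(i)): For every \(\varphi\in\mathcal{X}_N\) and every \(x\in\mathbb{T}_N\), \(0\leq(\varPi_x\varphi,\varphi)_+\leq\langle 1_{Q_-+x}\,A\nabla\varphi,\nabla\varphi\rangle = \sum_{z\in Q_-+x}\langle A\nabla\varphi(z),\nabla\varphi(z)\rangle_{\mathbb{R}^{m\times d}}\), where \(Q_-=\{0,1,\dots,l-1\}^d\). -/
namespace FRD

/-- The unit lattice vector `e j` in the discrete torus `(ZMod n)^d`. -/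
def unitVec (d n : ℕ) (j : Fin d) : Fin d → ZMod n := fun i => if i = j then 1 else 0

/-- Discrete forward gradient `(∇φ)^r_j(x) = φ^r(x+e_j) - φ^r(x)`. -/
def dGrad {d m : ℕ} (n : ℕ) (φ : (Fin d → ZMod n) → Fin m → ℝ) (x : Fin d → ZMod n) :
    Fin m → Fin d → ℝ :=
  fun r j => φ (x + unitVec d n j) r - φ x r

/-- Standard scalar product on `ℝ^{m×d}`. -/
def ginner {d m : ℕ} (F G : Fin m → Fin d → ℝ) : ℝ := ∑ r, ∑ j, F r j * G r j

/-- Action on `ℝ^{m×d}` of the linear map with coefficient array `A`. -/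
def appA {d m : ℕ} (A : Fin m × Fin d → Fin m × Fin d → ℝ) (F : Fin m → Fin d → ℝ) :
    Fin m → Fin d → ℝ :=
  fun r j => ∑ p : Fin m × Fin d, A (r, j) p * F p.1 p.2

/-- `ℓ²` scalar product `⟨φ,ψ⟩` on the torus. -/
def pairV {d m : ℕ} (n : ℕ) [NeZero n] (φ ψ : (Fin d → ZMod n) → Fin m → ℝ) : ℝ :=
  ∑ x, ∑ r, φ x r * ψ x r

/-- `φ` has zero mean (i.e. `φ ∈ 𝒳_N`). -/
def MeanZero {d m : ℕ} (n : ℕ) [NeZero n] (φ : (Fin d → ZMod n) → Fin m → ℝ) : Prop :=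
  ∑ x, φ x = 0

/-- Dirichlet form `(φ,ψ)_+ = ∑_x ⟨A ∇φ(x), ∇ψ(x)⟩`. -/
def plusForm {d m : ℕ} (n : ℕ) [NeZero n] (A : Fin m × Fin d → Fin m × Fin d → ℝ)
    (φ ψ : (Fin d → ZMod n) → Fin m → ℝ) : ℝ :=
  ∑ x, ginner (appA A (dGrad n φ x)) (dGrad n ψ x)

/-- The elliptic operator `𝒜 = ∇* (A ∇·)`. -/
def opA {d m : ℕ} (n : ℕ) (A : Fin m × Fin d → Fin m × Fin d → ℝ)
    (φ : (Fin d → ZMod n) → Fin m → ℝ) : (Fin d → ZMod n) → Fin m → ℝ :=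
  fun x r => ∑ j, (appA A (dGrad n φ (x - unitVec d n j)) r j - appA A (dGrad n φ x) r j)

/-- The discrete cube `{a,…,b}^d` viewed inside the torus. -/
def box (d n a b : ℕ) : Set (Fin d → ZMod n) :=
  {x | ∀ i, ∃ k : ℕ, a ≤ k ∧ k ≤ b ∧ x i = (k : ZMod n)}

/-- Distance to `0` on `ZMod n`, i.e. `min` over integer lifts of the absolute value. -/
def zdist (n : ℕ) (z : ZMod n) : ℕ := min z.val (n - z.val)

/-- The torus metric `ρ_∞`. -/
def distT {d : ℕ} (n : ℕ) (x y : Fin d → ZMod n) : ℕ :=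
  Finset.univ.sup fun i => zdist n (x i - y i)

/-- `P` is the `(·,·)_+`-orthogonal projection of `𝒳_N` onto the subspace `𝓗_+(Q+x)` of
mean-zero functions vanishing outside `Q + x`, where `Q = {1,…,l-1}^d`. -/
def IsProj {d m : ℕ} (n : ℕ) [NeZero n] (A : Fin m × Fin d → Fin m × Fin d → ℝ) (l : ℕ)
    (x : Fin d → ZMod n)
    (P : ((Fin d → ZMod n) → Fin m → ℝ) → (Fin d → ZMod n) → Fin m → ℝ) : Prop :=
  ∀ φ, MeanZero n φ →
    MeanZero n (P φ) ∧ (∀ y, y - x ∉ box d n 1 (l - 1) → P φ y = 0) ∧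
    ∀ ψ, MeanZero n ψ → (∀ y, y - x ∉ box d n 1 (l - 1) → ψ y = 0) →
      plusForm n A (P φ) ψ = plusForm n A φ ψ

/-- The averaged projection `𝒯 = l^{-d} ∑_x Π_x`. -/
noncomputable def Tavg {d m : ℕ} (n : ℕ) [NeZero n] (l : ℕ)
    (P : (Fin d → ZMod n) → ((Fin d → ZMod n) → Fin m → ℝ) → (Fin d → ZMod n) → Fin m → ℝ)
    (φ : (Fin d → ZMod n) → Fin m → ℝ) : (Fin d → ZMod n) → Fin m → ℝ :=
  ((l : ℝ) ^ d)⁻¹ • ∑ x, P x φ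

/-- Translation `τ_a φ = φ(· - a)`. -/
def tau {d m : ℕ} (n : ℕ) (a : Fin d → ZMod n) (φ : (Fin d → ZMod n) → Fin m → ℝ) :
    (Fin d → ZMod n) → Fin m → ℝ := fun y => φ (y - a)

/-- Convolution operator with matrix-valued kernel `K`. -/
def convK {d m : ℕ} (n : ℕ) [NeZero n] (K : (Fin d → ZMod n) → Fin m → Fin m → ℝ)
    (φ : (Fin d → ZMod n) → Fin m → ℝ) : (Fin d → ZMod n) → Fin m → ℝ :=
  fun x r => ∑ y, ∑ s, K (x - y) r s * φ y s

/-- Discrete forward derivative of a matrix-valued kernel. -/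
def kDeriv {d m : ℕ} (n : ℕ) (j : Fin d) (K : (Fin d → ZMod n) → Fin m → Fin m → ℝ) :
    (Fin d → ZMod n) → Fin m → Fin m → ℝ :=
  fun x r s => K (x + unitVec d n j) r s - K x r s

/-- The iterated discrete derivative `∇^α = ∏_i ∇_i^{α_i}` of a matrix-valued kernel. -/
def multiDeriv {d m : ℕ} (n : ℕ) (α : Fin d → ℕ)
    (K : (Fin d → ZMod n) → Fin m → Fin m → ℝ) : (Fin d → ZMod n) → Fin m → Fin m → ℝ :=
  (List.finRange d).foldr (fun j K' => (kDeriv n j)^[α j] K') K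

/-- Operator norm of an `m × m` matrix (as operator on Euclidean space). -/
noncomputable def matOpNorm {m : ℕ} (M : Fin m → Fin m → ℝ) : ℝ :=
  ‖Matrix.toEuclideanCLM (𝕜 := ℝ) (Matrix.of M)‖


section Aux

variable {d m : ℕ}

lemma ginner_self_nonneg (F : Fin m → Fin d → ℝ) : 0 ≤ ginner F F :=
  Finset.sum_nonneg fun _ _ => Finset.sum_nonneg fun _ _ => mul_self_nonneg _

lemma ginner_appA_expand (A : Fin m × Fin d → Fin m × Fin d → ℝ) (F G : Fin m → Fin d → ℝ) :
    ginner (appA A F) G =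
      ∑ q : Fin m × Fin d, ∑ p : Fin m × Fin d, A q p * F p.1 p.2 * G q.1 q.2 := by
  rw [Fintype.sum_prod_type]
  simp [ginner, appA, Finset.sum_mul]

lemma ginner_symm_A (A : Fin m × Fin d → Fin m × Fin d → ℝ)
    (hAsym : ∀ p q, A p q = A q p) (F G : Fin m → Fin d → ℝ) :
    ginner (appA A F) G = ginner (appA A G) F := by
  rw [ginner_appA_expand, ginner_appA_expand, Finset.sum_comm]
  refine Finset.sum_congr rfl fun q _ => Finset.sum_congr rfl fun p _ => ?_
  rw [hAsym p q]; ring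

lemma appA_sub (A : Fin m × Fin d → Fin m × Fin d → ℝ) (F G : Fin m → Fin d → ℝ) :
    appA A (F - G) = appA A F - appA A G := by
  funext r j
  simp [appA, mul_sub, Finset.sum_sub_distrib]

lemma ginner_sub_left (F G H : Fin m → Fin d → ℝ) :
    ginner (F - G) H = ginner F H - ginner G H := by
  simp [ginner, sub_mul, Finset.sum_sub_distrib]

lemma ginner_sub_right (F G H : Fin m → Fin d → ℝ) :
    ginner F (G - H) = ginner F G - ginner F H := by
  simp [ginner, mul_sub, Finset.sum_sub_distrib]

lemma two_B_le (c0 : ℝ) (hc0 : 0 < c0) (A : Fin m × Fin d → Fin m × Fin d → ℝ)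
    (hAsym : ∀ p q, A p q = A q p)
    (hApos : ∀ F : Fin m → Fin d → ℝ, c0 * ginner F F ≤ ginner (appA A F) F)
    (u v : Fin m → Fin d → ℝ) :
    2 * ginner (appA A u) v ≤ ginner (appA A u) u + ginner (appA A v) v := by
  have h0 : 0 ≤ ginner (appA A (u - v)) (u - v) :=
    le_trans (mul_nonneg hc0.le (ginner_self_nonneg _)) (hApos (u - v))
  rw [appA_sub, ginner_sub_left, ginner_sub_right, ginner_sub_right] at h0
  have hsym := ginner_symm_A A hAsym u v
  linarith

lemma B_self_nonneg (c0 : ℝ) (hc0 : 0 < c0) (A : Fin m × Fin d → Fin m × Fin d → ℝ)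
    (hApos : ∀ F : Fin m → Fin d → ℝ, c0 * ginner F F ≤ ginner (appA A F) F)
    (F : Fin m → Fin d → ℝ) : 0 ≤ ginner (appA A F) F :=
  le_trans (mul_nonneg hc0.le (ginner_self_nonneg _)) (hApos F)

lemma plusForm_symm (n : ℕ) [NeZero n] (A : Fin m × Fin d → Fin m × Fin d → ℝ)
    (hAsym : ∀ p q, A p q = A q p) (φ ψ : (Fin d → ZMod n) → Fin m → ℝ) :
    plusForm n A φ ψ = plusForm n A ψ φ :=
  Finset.sum_congr rfl fun z _ => ginner_symm_A A hAsym _ _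

lemma box_one_subset (n b : ℕ) : box d n 1 b ⊆ box d n 0 b := fun w hw i => by
  obtain ⟨k, _, hk2, hk3⟩ := hw i
  exact ⟨k, Nat.zero_le _, hk2, hk3⟩

end Aux

/-- **Lemma 3.4(i)**: `0 ≤ (Π_x φ, φ)_+ ≤ ⟨1_{Q_-+x} A∇φ, ∇φ⟩` for every `φ ∈ 𝒳_N`. -/
theorem statement8
    (d m L N l : ℕ) (hd : 1 ≤ d) (hm : 1 ≤ m) (hLodd : Odd L) (hL : 3 ≤ L) (hN : 1 ≤ N)
    [NeZero (L ^ N)] (hl : 3 ≤ l) (hlN : l - 1 < L ^ N)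
    (c0 : ℝ) (hc0 : 0 < c0)
    (A : Fin m × Fin d → Fin m × Fin d → ℝ)
    (hAsym : ∀ p q, A p q = A q p)
    (hApos : ∀ F : Fin m → Fin d → ℝ, c0 * ginner F F ≤ ginner (appA A F) F)
    (Pix : (Fin d → ZMod (L ^ N)) →
      ((Fin d → ZMod (L ^ N)) → Fin m → ℝ) → (Fin d → ZMod (L ^ N)) → Fin m → ℝ)
    (hPix : ∀ x, IsProj (L ^ N) A l x (Pix x))
    (φ : (Fin d → ZMod (L ^ N)) → Fin m → ℝ) (hφ : MeanZero (L ^ N) φ)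
    (x : Fin d → ZMod (L ^ N)) :
    0 ≤ plusForm (L ^ N) A (Pix x φ) φ ∧
    plusForm (L ^ N) A (Pix x φ) φ ≤
      ∑ z : Fin d → ZMod (L ^ N),
        Set.indicator {w : Fin d → ZMod (L ^ N) | w - x ∈ box d (L ^ N) 0 (l - 1)}
          (fun w => ginner (appA A (dGrad (L ^ N) φ w)) (dGrad (L ^ N) φ w)) z := by
  obtain ⟨hmz, hsupp, hproj⟩ := hPix x φ hφ
  set S : Set (Fin d → ZMod (L ^ N)) := {w | w - x ∈ box d (L ^ N) 0 (l - 1)} with hS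
  -- the gradient of Π_x φ vanishes off S
  have hgrad0 : ∀ z, z ∉ S → dGrad (L ^ N) (Pix x φ) z = 0 := by
    intro z hz
    have hz' : z - x ∉ box d (L ^ N) 1 (l - 1) := fun h => hz (box_one_subset (L ^ N) (l - 1) h)
    have hz2 : ∀ j, (z + unitVec d (L ^ N) j) - x ∉ box d (L ^ N) 1 (l - 1) := by
      intro j hmem
      apply hz
      intro i
      obtain ⟨k, hk1, hk2, hk3⟩ := hmem i
      by_cases hij : i = j
      · refine ⟨k - 1, Nat.zero_le _, le_trans (Nat.sub_le k 1) hk2, ?_⟩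
        have hcoord : (z + unitVec d (L ^ N) j - x) i = (z - x) i + 1 := by
          simp [unitVec, hij]
          ring
        rw [hcoord] at hk3
        have : (z - x) i = (k : ZMod (L ^ N)) - 1 := eq_sub_of_add_eq hk3
        rw [this, Nat.cast_sub hk1, Nat.cast_one]
      · refine ⟨k, Nat.zero_le _, hk2, ?_⟩
        have hcoord : (z + unitVec d (L ^ N) j - x) i = (z - x) i := by
          simp [unitVec, hij]
        rw [hcoord] at hk3
        exact hk3
    funext r j
    simp [dGrad, hsupp z hz', hsupp (z + unitVec d (L ^ N) j) (hz2 j)]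
  -- projection identity: (Πφ, φ)_+ = (Πφ, Πφ)_+
  have key : plusForm (L ^ N) A (Pix x φ) (Pix x φ) = plusForm (L ^ N) A φ (Pix x φ) :=
    hproj (Pix x φ) hmz hsupp
  have hsymP : plusForm (L ^ N) A (Pix x φ) φ = plusForm (L ^ N) A (Pix x φ) (Pix x φ) := by
    rw [plusForm_symm (L ^ N) A hAsym (Pix x φ) φ, ← key]
  constructor
  · rw [hsymP]
    exact Finset.sum_nonneg fun z _ => B_self_nonneg c0 hc0 A hApos _
  · have hstep : ∀ z : Fin d → ZMod (L ^ N),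
        ginner (appA A (dGrad (L ^ N) (Pix x φ) z)) (dGrad (L ^ N) φ z) ≤
          (1 / 2) * ginner (appA A (dGrad (L ^ N) (Pix x φ) z)) (dGrad (L ^ N) (Pix x φ) z) +
          (1 / 2) * S.indicator
            (fun w => ginner (appA A (dGrad (L ^ N) φ w)) (dGrad (L ^ N) φ w)) z := by
      intro z
      by_cases hz : z ∈ S
      · rw [Set.indicator_of_mem hz]
        have := two_B_le c0 hc0 A hAsym hApos (dGrad (L ^ N) (Pix x φ) z) (dGrad (L ^ N) φ z)
        linarith
      · rw [Set.indicator_of_notMem hz, hgrad0 z hz]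
        simp [appA, ginner]
    have hsum : plusForm (L ^ N) A (Pix x φ) φ ≤
        (1 / 2) * plusForm (L ^ N) A (Pix x φ) (Pix x φ) +
        (1 / 2) * ∑ z : Fin d → ZMod (L ^ N), S.indicator
          (fun w => ginner (appA A (dGrad (L ^ N) φ w)) (dGrad (L ^ N) φ w)) z := by
      calc plusForm (L ^ N) A (Pix x φ) φ
          ≤ ∑ z : Fin d → ZMod (L ^ N),
              ((1 / 2) * ginner (appA A (dGrad (L ^ N) (Pix x φ) z)) (dGrad (L ^ N) (Pix x φ) z) +
               (1 / 2) * S.indicator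
                 (fun w => ginner (appA A (dGrad (L ^ N) φ w)) (dGrad (L ^ N) φ w)) z) :=
            Finset.sum_le_sum fun z _ => hstep z
        _ = _ := by
            rw [Finset.sum_add_distrib, ← Finset.mul_sum, ← Finset.mul_sum]
            rfl
    rw [hsymP] at hsum ⊢
    linarith

end FRD
end

section
/- Finite range of the averaging operators (Lemma 3.7): If \(\varphi,\psi\in\mathcal{X}_N\) satisfy \(\mathrm{dist}_\infty(\mathrm{supp}\,\varphi,\mathrm{supp}\,\psi)>l-1\), then \(\langle\mathscr{T}\varphi,\psi\rangle=0\), \(\langle\mathscr{T}'\varphi,\psi\rangle=0\), \(\langle\mathscr{R}\varphi,\psi\rangle=0\), and \(\langle\mathscr{R}'\varphi,\psi\rangle=0\). -/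
/-!
For a single projection `Π_x`: if `ψ` vanishes on the box `Q + x`, then `⟨Π_x φ, ψ⟩ = 0` because
`Π_x φ` is supported in the box. Otherwise `ψ` is nonzero somewhere in the box, which has
`ρ_∞`-diameter `l - 2`, so `φ` lives at distance `> 1` from the box. Then `∇φ` and `∇Π_x φ` have
disjoint supports, so `(Π_x φ, Π_x φ)_+ = (φ, Π_x φ)_+ = 0`, and coercivity of `A` together with
the mean-zero condition forces `Π_x φ = 0`. Averaging over `x` gives `⟨𝒯φ, ψ⟩ = 0`.

For `𝒯'`, summation by parts (`⟨𝒜g, χ⟩ = (g, χ)_+`) and the symmetry of each `Π_x` with respect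
to `(·,·)_+` give `⟨𝒜𝒯𝒜⁻¹φ, ψ⟩ = ⟨φ, 𝒯ψ⟩`, which vanishes by the first case with `φ` and `ψ`
exchanged. The claims for `ℛ` and `ℛ'` follow because `φ` and `ψ` have disjoint supports.
-/

namespace FRD

theorem sum_sub_mul_eq_sum_mul_sub {Γ R : Type*} [AddCommGroup Γ] [Fintype Γ] [CommRing R]
    (g f : Γ → R) (e : Γ) :
    ∑ x, (g (x - e) - g x) * f x = ∑ x, g x * (f (x + e) - f x) := by
  have h : ∑ x, g (x - e) * f x = ∑ x, g x * f (x + e) :=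
    Fintype.sum_equiv (Equiv.subRight e) _ _ fun x => by simp
  simp only [sub_mul, mul_sub, Finset.sum_sub_distrib, h]

section Forms
variable {d m : ℕ} (n : ℕ) [NeZero n]

def pairVₗ : ((Fin d → ZMod n) → Fin m → ℝ) →ₗ[ℝ] ((Fin d → ZMod n) → Fin m → ℝ) →ₗ[ℝ] ℝ :=
  LinearMap.mk₂ ℝ (pairV n)
    (fun _ _ _ => by simp only [pairV, Pi.add_apply, add_mul, Finset.sum_add_distrib])
    (fun _ _ _ => by simp only [pairV, Pi.smul_apply, smul_eq_mul, mul_assoc, Finset.mul_sum])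
    (fun _ _ _ => by simp only [pairV, Pi.add_apply, mul_add, Finset.sum_add_distrib])
    (fun _ _ _ => by simp only [pairV, Pi.smul_apply, smul_eq_mul, mul_left_comm, Finset.mul_sum])

def plusFormₗ (A : Fin m × Fin d → Fin m × Fin d → ℝ) :
    ((Fin d → ZMod n) → Fin m → ℝ) →ₗ[ℝ] ((Fin d → ZMod n) → Fin m → ℝ) →ₗ[ℝ] ℝ :=
  LinearMap.mk₂ ℝ (plusForm n A)
    (fun _ _ _ => by
      simp only [plusForm, ginner, appA, dGrad, Pi.add_apply, add_sub_add_comm, mul_add,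
        add_mul, Finset.sum_add_distrib])
    (fun _ _ _ => by
      simp only [plusForm, ginner, appA, dGrad, Pi.smul_apply, smul_eq_mul, ← mul_sub,
        mul_left_comm _ (_ : ℝ) _, ← Finset.mul_sum, mul_assoc])
    (fun _ _ _ => by
      simp only [plusForm, ginner, appA, dGrad, Pi.add_apply, add_sub_add_comm, mul_add,
        Finset.sum_add_distrib])
    (fun _ _ _ => by
      simp only [plusForm, ginner, appA, dGrad, Pi.smul_apply, smul_eq_mul, ← mul_sub,
        mul_left_comm _ (_ : ℝ) _, ← Finset.mul_sum])

theorem pairV_sub_left (f g ψ : (Fin d → ZMod n) → Fin m → ℝ) :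
    pairV n (f - g) ψ = pairV n f ψ - pairV n g ψ :=
  LinearMap.map_sub₂ (pairVₗ n) f g ψ

theorem pairV_comm (φ ψ : (Fin d → ZMod n) → Fin m → ℝ) : pairV n φ ψ = pairV n ψ φ := by
  simp only [pairV, mul_comm]

theorem pairV_opA (A : Fin m × Fin d → Fin m × Fin d → ℝ)
    (g χ : (Fin d → ZMod n) → Fin m → ℝ) :
    pairV n (opA n A g) χ = plusForm n A g χ := by
  simp only [pairV, plusForm, opA, ginner, Finset.sum_mul]
  rw [Finset.sum_comm]
  conv_rhs => rw [Finset.sum_comm]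
  refine Finset.sum_congr rfl fun r _ => ?_
  rw [Finset.sum_comm]
  conv_rhs => rw [Finset.sum_comm]
  refine Finset.sum_congr rfl fun j _ => ?_
  exact sum_sub_mul_eq_sum_mul_sub (fun x => appA A (dGrad n g x) r j) (fun x => χ x r) _

theorem ginner_appA_comm {A : Fin m × Fin d → Fin m × Fin d → ℝ} (hA : ∀ p q, A p q = A q p)
    (F G : Fin m → Fin d → ℝ) : ginner (appA A F) G = ginner (appA A G) F := by
  have h (F G : Fin m → Fin d → ℝ) :
      ginner (appA A F) G =
        ∑ q : Fin m × Fin d, ∑ p : Fin m × Fin d, A q p * F p.1 p.2 * G q.1 q.2 := by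
    simp only [ginner, appA, Finset.sum_mul,
      Fintype.sum_prod_type (f := fun q : Fin m × Fin d => ∑ p : Fin m × Fin d, _)]
  rw [h, h, Finset.sum_comm]
  simp only [hA, mul_right_comm]

theorem plusForm_comm {A : Fin m × Fin d → Fin m × Fin d → ℝ} (hA : ∀ p q, A p q = A q p)
    (φ ψ : (Fin d → ZMod n) → Fin m → ℝ) : plusForm n A φ ψ = plusForm n A ψ φ :=
  Finset.sum_congr rfl fun _ _ => ginner_appA_comm hA _ _

end Forms

section Distance
variable (n : ℕ) {d : ℕ}

theorem zdist_natCast_le (k : ℕ) : zdist n k ≤ k :=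
  (min_le_left _ _).trans ((ZMod.val_natCast n k).trans_le (Nat.mod_le k n))

theorem distT_self (x : Fin d → ZMod n) : distT n x x = 0 := by
  simp [distT, zdist]

variable [NeZero n]

theorem zdist_neg (z : ZMod n) : zdist n (-z) = zdist n z := by
  rcases eq_or_ne z 0 with rfl | h
  · simp
  · rw [zdist, zdist, ZMod.neg_val, if_neg h, Nat.sub_sub_self (ZMod.val_lt z).le, min_comm]

theorem zdist_add_le (a b : ZMod n) : zdist n (a + b) ≤ zdist n a + zdist n b := by
  have ha := ZMod.val_lt a
  have hb := ZMod.val_lt b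
  have hab := ZMod.val_add a b
  simp only [zdist]
  rcases lt_or_ge (a.val + b.val) n with h | h
  · rw [Nat.mod_eq_of_lt h] at hab; omega
  · rw [Nat.mod_eq_sub_mod h, Nat.mod_eq_of_lt (by omega)] at hab; omega

theorem zdist_natCast_sub_natCast_le (k k' : ℕ) : zdist n (k - k') ≤ max k k' - min k k' := by
  rcases le_total k' k with h | h
  · rw [← Nat.cast_sub h, max_eq_left h, min_eq_right h]
    exact zdist_natCast_le n _
  · rw [← neg_sub, ← Nat.cast_sub h, zdist_neg, max_eq_right h, min_eq_left h]
    exact zdist_natCast_le n _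

theorem distT_comm (x y : Fin d → ZMod n) : distT n x y = distT n y x := by
  simp only [distT, ← neg_sub (y _), zdist_neg]

theorem distT_triangle (x y z : Fin d → ZMod n) : distT n x z ≤ distT n x y + distT n y z :=
  Finset.sup_le fun i hi => by
    rw [← sub_add_sub_cancel (x i) (y i)]
    exact (zdist_add_le n _ _).trans
      (add_le_add (Finset.le_sup (f := fun i => zdist n (x i - y i)) hi)
        (Finset.le_sup (f := fun i => zdist n (y i - z i)) hi))

theorem distT_add_le_one (y a b : Fin d → ZMod n) (ha : ∀ i, a i = 0 ∨ a i = 1)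
    (hb : ∀ i, b i = 0 ∨ b i = 1) : distT n (y + a) (y + b) ≤ 1 :=
  Finset.sup_le fun i _ => by
    have h1 : zdist n 1 ≤ 1 := by simpa using zdist_natCast_le n 1
    rw [Pi.add_apply, Pi.add_apply, add_sub_add_left_eq_sub]
    rcases ha i with h | h <;> rcases hb i with h' | h' <;>
      simp only [h, h', sub_self, sub_zero, zero_sub, zdist_neg, h1] <;> simp [zdist]

theorem distT_le_of_mem_box {l : ℕ} {x u w : Fin d → ZMod n}
    (hu : u - x ∈ box d n 1 (l - 1)) (hw : w - x ∈ box d n 1 (l - 1)) :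
    distT n u w ≤ l - 2 :=
  Finset.sup_le fun i _ => by
    obtain ⟨k, hk1, hkl, hk⟩ := hu i
    obtain ⟨k', hk1', hkl', hk'⟩ := hw i
    rw [← sub_sub_sub_cancel_right (u i) (w i) (x i)]
    change zdist n ((u - x) i - (w - x) i) ≤ l - 2
    rw [hk, hk']
    have := zdist_natCast_sub_natCast_le n k k'
    omega

end Distance

section Rigidity
variable {d m : ℕ} (n : ℕ)

theorem unitVec_eq_single (j : Fin d) : unitVec d n j = Pi.single j 1 := by
  ext i
  simp [unitVec, Pi.single_apply]

variable [NeZero n]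

theorem eq_of_forall_add_unitVec_eq {β : Type*} {f : (Fin d → ZMod n) → β}
    (hf : ∀ y j, f (y + unitVec d n j) = f y) (y z : Fin d → ZMod n) : f y = f z := by
  let periods : AddSubmonoid (Fin d → ZMod n) :=
    { carrier := {v | ∀ y, f (y + v) = f y}
      add_mem' := fun ha hb y => by rw [← add_assoc, hb, ha]
      zero_mem' := fun y => by rw [add_zero] }
  have hsingle (j : Fin d) (c : ZMod n) : Pi.single j c ∈ periods := by
    rw [← ZMod.natCast_zmod_val c, ← nsmul_one, Pi.single_smul]
    exact AddSubmonoid.nsmul_mem _ (by simpa [unitVec_eq_single] using hf · j) _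
  have hmem : z - y ∈ periods := by
    rw [← Finset.univ_sum_single (z - y)]
    exact AddSubmonoid.sum_mem _ fun j _ => hsingle j _
  simpa using (hmem y).symm

theorem eq_zero_of_dGrad_eq_zero {g : (Fin d → ZMod n) → Fin m → ℝ} (hg : MeanZero n g)
    (hgrad : ∀ y, dGrad n g y = 0) : g = 0 := by
  have hconst (y : Fin d → ZMod n) : g y = g 0 :=
    eq_of_forall_add_unitVec_eq n (fun y j => funext fun r => sub_eq_zero.1
      (congrFun (congrFun (hgrad y) r) j)) y 0
  have h0 : g 0 = 0 := by
    simp only [MeanZero, hconst, Finset.sum_const, Finset.card_univ] at hg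
    exact (smul_eq_zero.1 hg).resolve_left (Fintype.card_ne_zero)
  exact funext fun y => (hconst y).trans h0

theorem ginner_self_eq_zero {F : Fin m → Fin d → ℝ} : ginner F F = 0 ↔ F = 0 := by
  rw [ginner, Finset.sum_eq_zero_iff_of_nonneg fun r _ => Finset.sum_nonneg fun j _ =>
    mul_self_nonneg _]
  simp [Finset.sum_mul_self_eq_zero_iff, funext_iff]

theorem eq_zero_of_plusForm_self_eq_zero {c0 : ℝ} (hc0 : 0 < c0)
    {A : Fin m × Fin d → Fin m × Fin d → ℝ}
    (hA : ∀ F : Fin m → Fin d → ℝ, c0 * ginner F F ≤ ginner (appA A F) F)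
    {g : (Fin d → ZMod n) → Fin m → ℝ} (hg : MeanZero n g) (h : plusForm n A g g = 0) :
    g = 0 := by
  have hnonneg (y : Fin d → ZMod n) : 0 ≤ ginner (dGrad n g y) (dGrad n g y) :=
    Finset.sum_nonneg fun _ _ => Finset.sum_nonneg fun _ _ => mul_self_nonneg _
  have hle : c0 * ∑ y, ginner (dGrad n g y) (dGrad n g y) ≤ 0 := by
    rw [Finset.mul_sum, ← h]
    exact Finset.sum_le_sum fun y _ => hA _
  have hsum : ∑ y, ginner (dGrad n g y) (dGrad n g y) = 0 :=
    le_antisymm (nonpos_of_mul_nonpos_right hle hc0) (Finset.sum_nonneg fun y _ => hnonneg y)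
  refine eq_zero_of_dGrad_eq_zero n hg fun y => ginner_self_eq_zero.1 ?_
  exact (Finset.sum_eq_zero_iff_of_nonneg fun y _ => hnonneg y).1 hsum y (Finset.mem_univ y)

end Rigidity

section Separation
variable {d m : ℕ} (n : ℕ) [NeZero n]

theorem exists_add_ne_zero_of_dGrad_ne_zero {f : (Fin d → ZMod n) → Fin m → ℝ}
    {y : Fin d → ZMod n} (h : dGrad n f y ≠ 0) :
    ∃ a : Fin d → ZMod n, (∀ i, a i = 0 ∨ a i = 1) ∧ f (y + a) ≠ 0 := by
  by_contra! hf
  refine h (funext fun r => funext fun j => ?_)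
  have hj : f (y + unitVec d n j) = 0 := hf _ fun i => by unfold unitVec; split_ifs <;> simp
  have h0 : f y = 0 := by simpa using hf 0 fun i => Or.inl rfl
  simp [dGrad, hj, h0]

theorem plusForm_eq_zero_of_one_lt_distT (A : Fin m × Fin d → Fin m × Fin d → ℝ)
    {f g : (Fin d → ZMod n) → Fin m → ℝ}
    (hfg : ∀ u, f u ≠ 0 → ∀ v, g v ≠ 0 → 1 < distT n u v) : plusForm n A f g = 0 := by
  refine Finset.sum_eq_zero fun y _ => ?_
  by_cases hf : dGrad n f y = 0
  · simp [hf, appA, ginner]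
  by_cases hg : dGrad n g y = 0
  · simp [hg, ginner]
  obtain ⟨a, ha, hfa⟩ := exists_add_ne_zero_of_dGrad_ne_zero n hf
  obtain ⟨b, hb, hgb⟩ := exists_add_ne_zero_of_dGrad_ne_zero n hg
  exact absurd (distT_add_le_one n y a b ha hb) (hfg _ hfa _ hgb).not_ge

theorem pairV_eq_zero_of_forall_eq_zero_or_eq_zero {f g : (Fin d → ZMod n) → Fin m → ℝ}
    (h : ∀ y, f y = 0 ∨ g y = 0) : pairV n f g = 0 :=
  Finset.sum_eq_zero fun y _ => by rcases h y with h | h <;> simp [h]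

end Separation

namespace IsProj
variable {d m n l : ℕ} [NeZero n] {A : Fin m × Fin d → Fin m × Fin d → ℝ}
  {x : Fin d → ZMod n} {P : ((Fin d → ZMod n) → Fin m → ℝ) → (Fin d → ZMod n) → Fin m → ℝ}

theorem plusForm_comm (hP : IsProj n A l x P) (hA : ∀ p q, A p q = A q p)
    {g ψ : (Fin d → ZMod n) → Fin m → ℝ} (hg : MeanZero n g) (hψ : MeanZero n ψ) :
    plusForm n A (P g) ψ = plusForm n A g (P ψ) := by
  obtain ⟨hPg, hPg_supp, hPg_form⟩ := hP g hg
  obtain ⟨hPψ, hPψ_supp, hPψ_form⟩ := hP ψ hψ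
  rw [FRD.plusForm_comm n hA, ← hPψ_form _ hPg hPg_supp, FRD.plusForm_comm n hA,
    hPg_form _ hPψ hPψ_supp]

theorem pairV_eq_zero (hP : IsProj n A l x P) (hl : 2 ≤ l) {c0 : ℝ} (hc0 : 0 < c0)
    (hA : ∀ F : Fin m → Fin d → ℝ, c0 * ginner F F ≤ ginner (appA A F) F)
    {φ ψ : (Fin d → ZMod n) → Fin m → ℝ} (hφ : MeanZero n φ)
    (hfar : ∀ u, φ u ≠ 0 → ∀ w, ψ w ≠ 0 → l - 1 < distT n u w) :
    pairV n (P φ) ψ = 0 := by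
  obtain ⟨hPφ, hPφ_supp, hPφ_form⟩ := hP φ hφ
  by_cases hψ : ∃ w, w - x ∈ box d n 1 (l - 1) ∧ ψ w ≠ 0
  · obtain ⟨w, hw, hψw⟩ := hψ
    have hsep : ∀ u, φ u ≠ 0 → ∀ v, P φ v ≠ 0 → 1 < distT n u v := fun u hu v hv => by
      have hv : v - x ∈ box d n 1 (l - 1) := by_contra fun h => hv (hPφ_supp v h)
      have := distT_triangle n u v w
      have := distT_le_of_mem_box n hv hw
      have := hfar u hu w hψw
      omega
    have hzero : P φ = 0 := eq_zero_of_plusForm_self_eq_zero n hc0 hA hPφ <| by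
      rw [hPφ_form _ hPφ hPφ_supp, plusForm_eq_zero_of_one_lt_distT n A hsep]
    simp [hzero, pairV]
  · refine pairV_eq_zero_of_forall_eq_zero_or_eq_zero n fun y => ?_
    by_cases hy : y - x ∈ box d n 1 (l - 1)
    · exact Or.inr (by_contra fun h => hψ ⟨y, hy, h⟩)
    · exact Or.inl (hPφ_supp y hy)

end IsProj

section Averaging
variable {d m : ℕ} (n : ℕ) [NeZero n] (l : ℕ) (A : Fin m × Fin d → Fin m × Fin d → ℝ)
  (P : (Fin d → ZMod n) → ((Fin d → ZMod n) → Fin m → ℝ) → (Fin d → ZMod n) → Fin m → ℝ)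

theorem pairV_Tavg (φ ψ : (Fin d → ZMod n) → Fin m → ℝ) :
    pairV n (Tavg n l P φ) ψ = ((l : ℝ) ^ d)⁻¹ * ∑ x, pairV n (P x φ) ψ := by
  change pairVₗ n (Tavg n l P φ) ψ = _
  simp only [Tavg, map_smul, map_sum, LinearMap.smul_apply, LinearMap.sum_apply,
    smul_eq_mul]
  rfl

theorem plusForm_Tavg_left (φ ψ : (Fin d → ZMod n) → Fin m → ℝ) :
    plusForm n A (Tavg n l P φ) ψ = ((l : ℝ) ^ d)⁻¹ * ∑ x, plusForm n A (P x φ) ψ := by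
  change plusFormₗ n A (Tavg n l P φ) ψ = _
  simp only [Tavg, map_smul, map_sum, LinearMap.smul_apply, LinearMap.sum_apply,
    smul_eq_mul]
  rfl

theorem plusForm_Tavg_right (φ ψ : (Fin d → ZMod n) → Fin m → ℝ) :
    plusForm n A φ (Tavg n l P ψ) = ((l : ℝ) ^ d)⁻¹ * ∑ x, plusForm n A φ (P x ψ) := by
  change plusFormₗ n A φ (Tavg n l P ψ) = _
  simp only [Tavg, map_smul, map_sum, smul_eq_mul]
  rfl

theorem pairV_opA_Tavg (hP : ∀ x, IsProj n A l x (P x)) (hA : ∀ p q, A p q = A q p)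
    {g ψ : (Fin d → ZMod n) → Fin m → ℝ} (hg : MeanZero n g) (hψ : MeanZero n ψ) :
    pairV n (opA n A (Tavg n l P g)) ψ = pairV n (opA n A g) (Tavg n l P ψ) := by
  simp only [pairV_opA, plusForm_Tavg_left, plusForm_Tavg_right,
    (hP _).plusForm_comm hA hg hψ]

theorem pairV_Tavg_eq_zero (hP : ∀ x, IsProj n A l x (P x)) (hl : 2 ≤ l) {c0 : ℝ}
    (hc0 : 0 < c0)
    (hA : ∀ F : Fin m → Fin d → ℝ, c0 * ginner F F ≤ ginner (appA A F) F)
    {φ ψ : (Fin d → ZMod n) → Fin m → ℝ} (hφ : MeanZero n φ)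
    (hfar : ∀ u, φ u ≠ 0 → ∀ w, ψ w ≠ 0 → l - 1 < distT n u w) :
    pairV n (Tavg n l P φ) ψ = 0 := by
  simp [pairV_Tavg, (hP _).pairV_eq_zero hl hc0 hA hφ hfar]

end Averaging

theorem statement14_general
    (d m L N l : ℕ)
    [NeZero (L ^ N)] (hl : 3 ≤ l)
    (c0 : ℝ) (hc0 : 0 < c0)
    (A : Fin m × Fin d → Fin m × Fin d → ℝ)
    (hAsym : ∀ p q, A p q = A q p)
    (hApos : ∀ F : Fin m → Fin d → ℝ, c0 * ginner F F ≤ ginner (appA A F) F)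
    (Pix : (Fin d → ZMod (L ^ N)) →
      ((Fin d → ZMod (L ^ N)) → Fin m → ℝ) → (Fin d → ZMod (L ^ N)) → Fin m → ℝ)
    (hPix : ∀ x, IsProj (L ^ N) A l x (Pix x))
    -- `Cop = 𝒜⁻¹` is the inverse of `𝒜` on `𝒳_N`
    (Cop : ((Fin d → ZMod (L ^ N)) → Fin m → ℝ) → (Fin d → ZMod (L ^ N)) → Fin m → ℝ)
    (hCop : ∀ φ, MeanZero (L ^ N) φ →
      MeanZero (L ^ N) (Cop φ) ∧ opA (L ^ N) A (Cop φ) = φ ∧ Cop (opA (L ^ N) A φ) = φ)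
    (φ ψ : (Fin d → ZMod (L ^ N)) → Fin m → ℝ)
    (hφ : MeanZero (L ^ N) φ) (hψ : MeanZero (L ^ N) ψ)
    (hfar : ∀ x, φ x ≠ 0 → ∀ y, ψ y ≠ 0 → l - 1 < distT (L ^ N) x y) :
    pairV (L ^ N) (Tavg (L ^ N) l Pix φ) ψ = 0 ∧
    pairV (L ^ N) (opA (L ^ N) A (Tavg (L ^ N) l Pix (Cop φ))) ψ = 0 ∧
    pairV (L ^ N) (fun y => φ y - Tavg (L ^ N) l Pix φ y) ψ = 0 ∧
    pairV (L ^ N) (fun y => φ y - opA (L ^ N) A (Tavg (L ^ N) l Pix (Cop φ)) y) ψ = 0 := by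
  have hfar_symm : ∀ u, ψ u ≠ 0 → ∀ w, φ w ≠ 0 → l - 1 < distT (L ^ N) u w :=
    fun u hu w hw => distT_comm (L ^ N) w u ▸ hfar w hw u hu
  have hdisj : pairV (L ^ N) φ ψ = 0 :=
    pairV_eq_zero_of_forall_eq_zero_or_eq_zero _ fun y => by
      by_contra! h
      simpa [distT_self] using hfar y h.1 y h.2
  have hT : pairV (L ^ N) (Tavg (L ^ N) l Pix φ) ψ = 0 :=
    pairV_Tavg_eq_zero _ l A Pix hPix (by omega) hc0 hApos hφ hfar
  obtain ⟨hCφ, hACφ, -⟩ := hCop φ hφ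
  have hT' : pairV (L ^ N) (opA (L ^ N) A (Tavg (L ^ N) l Pix (Cop φ))) ψ = 0 := by
    rw [pairV_opA_Tavg _ l A Pix hPix hAsym hCφ hψ, hACφ, pairV_comm,
      pairV_Tavg_eq_zero _ l A Pix hPix (by omega) hc0 hApos hψ hfar_symm]
  refine ⟨hT, hT', ?_, ?_⟩
  · exact (pairV_sub_left _ φ _ ψ).trans (by rw [hdisj, hT, sub_zero])
  · exact (pairV_sub_left _ φ _ ψ).trans (by rw [hdisj, hT', sub_zero])

/-- **Lemma 3.7**: if `dist_∞(supp φ, supp ψ) > l-1` then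
`⟨𝒯φ,ψ⟩ = ⟨𝒯'φ,ψ⟩ = ⟨𝓡φ,ψ⟩ = ⟨𝓡'φ,ψ⟩ = 0`, where `𝒯' = 𝒜 𝒯 𝒜⁻¹`, `𝓡 = id - 𝒯`,
`𝓡' = id - 𝒯'`. -/
theorem statement14
    (d m L N l : ℕ) (hd : 1 ≤ d) (hm : 1 ≤ m) (hLodd : Odd L) (hL : 3 ≤ L) (hN : 1 ≤ N)
    [NeZero (L ^ N)] (hl : 3 ≤ l) (hlN : l - 1 < L ^ N)
    (c0 : ℝ) (hc0 : 0 < c0)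
    (A : Fin m × Fin d → Fin m × Fin d → ℝ)
    (hAsym : ∀ p q, A p q = A q p)
    (hApos : ∀ F : Fin m → Fin d → ℝ, c0 * ginner F F ≤ ginner (appA A F) F)
    (Pix : (Fin d → ZMod (L ^ N)) →
      ((Fin d → ZMod (L ^ N)) → Fin m → ℝ) → (Fin d → ZMod (L ^ N)) → Fin m → ℝ)
    (hPix : ∀ x, IsProj (L ^ N) A l x (Pix x))
    -- `Cop = 𝒜⁻¹` is the inverse of `𝒜` on `𝒳_N`
    (Cop : ((Fin d → ZMod (L ^ N)) → Fin m → ℝ) → (Fin d → ZMod (L ^ N)) → Fin m → ℝ)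
    (hCop : ∀ φ, MeanZero (L ^ N) φ →
      MeanZero (L ^ N) (Cop φ) ∧ opA (L ^ N) A (Cop φ) = φ ∧ Cop (opA (L ^ N) A φ) = φ)
    (φ ψ : (Fin d → ZMod (L ^ N)) → Fin m → ℝ)
    (hφ : MeanZero (L ^ N) φ) (hψ : MeanZero (L ^ N) ψ)
    (hfar : ∀ x, φ x ≠ 0 → ∀ y, ψ y ≠ 0 → l - 1 < distT (L ^ N) x y) :
    pairV (L ^ N) (Tavg (L ^ N) l Pix φ) ψ = 0 ∧
    pairV (L ^ N) (opA (L ^ N) A (Tavg (L ^ N) l Pix (Cop φ))) ψ = 0 ∧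
    pairV (L ^ N) (fun y => φ y - Tavg (L ^ N) l Pix φ y) ψ = 0 ∧
    pairV (L ^ N) (fun y => φ y - opA (L ^ N) A (Tavg (L ^ N) l Pix (Cop φ)) y) ψ = 0 :=
  statement14_general d m L N l hl c0 hc0 A hAsym hApos Pix hPix Cop hCop φ ψ hφ hψ hfar

end FRD
end

section
/- Summation estimates over the dual torus (Lemma 4.3): Let \(n\geq 0\) be an integer and \(c\geq 1\). Then there exists a constant \(c'\) (depending on \(c\), \(n\) and \(d\)) such that, with \(\eta=\max(\tfrac14(d+n-1)^2,\,d+n+6)+2\), for all integers \(L\geq 3\), \(N\geq 1\) and all \(k=1,\dots,N+1\): (a) \(L^{-dN}\sum_{p\in\widehat{\mathbb{T}}_N\setminus\{0\}}M_{k-1,c,L}(p)\widetilde M_{k-1,c,L}(p)|p|^{n-2}\leq c'L^\eta L^{-(k-1)(d+n-2)}\); (b) \(L^{-dN}\sum_{p\in\widehat{\mathbb{T}}_N\setminus\{0\}}\widetilde M_{k-1,c,L}(p)^2|p|^{n-2}\leq c\,c'L^{\eta+8}L^{-(k-1)(d+n-2)}\); (c) \(L^{-dN}\sum_{p\in\widehat{\mathbb{T}}_N\setminus\{0\}}M_{N,c,L}(p)^2|p|^{n-2}\leq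 c'L^\eta L^{-N(d+n-2)}\). -/
/-!
Sort the nonzero momenta by annulus. The annulus `A_j` holds at most `(3 L^{N+1-j})^d` points of
the dual torus, and on it `|p|^{n-2} ≲ L^{n - j(n-2)}`, so every sum in question is bounded by
`L^{d+n} ∑_{j ≤ N} W(j) L^{-j(d+n-2)}`, where `W` is the step weight. For `W = M_k M̃_k` this
one-dimensional sum splits at `j = k`: below `k` it is the Gaussian-type sum
`L^{-k(d+n-2)} ∑_m c^{2m} L^{m(d+n-3-m)} ≲ L^{(d+n-3)²/4 - k(d+n-2)}`, above `k` it is geometric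
with leading term `c L^{8 - k(d+n-2)}`; hence `η = d + n + max((d+n-3)²/4, 8)`. Parts (b) and (c)
follow from (a) because `M̃_k ≤ c L^8 M_k` everywhere and `M_N ≤ M̃_N` on the annuli `j ≤ N`.
-/

namespace FRD

/-- The symmetric integer representative of `z : ZMod n` (for odd `n`):
the unique `k ∈ (-n/2, n/2]` with `k ≡ z [ZMOD n]`. -/
def intRep (n : ℕ) (z : ZMod n) : ℤ :=
  if 2 * z.val ≤ n - 1 then (z.val : ℤ) else (z.val : ℤ) - (n : ℤ)

/-- The Euclidean norm `|p|` of the dual torus point `p` indexed by `z ∈ (ZMod n)^d`,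
`p_i = 2π·intRep(z_i)/n`. -/
noncomputable def pNorm {d : ℕ} (n : ℕ) (p : Fin d → ZMod n) : ℝ :=
  Real.sqrt (∑ i, (2 * Real.pi * (intRep n (p i) : ℝ) / n) ^ 2)

/-- Index of the annulus `A_j` containing a point of the dual torus with `|p| = r`:
`annIdx L r = j ≥ 1` iff `π L^{-j} ≤ r < π L^{-j+1}`, and `annIdx L r = 0` iff `r ≥ π`. -/
noncomputable def annIdx (L : ℕ) (r : ℝ) : ℕ :=
  sSup {j : ℕ | r < Real.pi * (L : ℝ) ^ (1 - (j : ℤ))}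

/-- The step function `M_{k,c,L}` as a function of the annulus index `j`. -/
noncomputable def Mstep (c : ℝ) (L : ℕ) (k j : ℕ) : ℝ :=
  if k ≤ j then 1 else c ^ (k - j) * ((L : ℝ) ^ ((k - j) * (k - j + 1) / 2))⁻¹

/-- The step function `M̃_{k,c,L}` as a function of the annulus index `j`. -/
noncomputable def MstepT (c : ℝ) (L : ℕ) (k j : ℕ) : ℝ :=
  if k ≤ j then c * (L : ℝ) ^ (8 : ℕ) * (L : ℝ) ^ (4 * ((k : ℤ) - (j : ℤ)))
  else c ^ (k - j) * ((L : ℝ) ^ ((k - j) * (k - j + 1) / 2))⁻¹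

/-- The exponent `η(n,d) = max(¼(d+n-1)², d+n+6) + 2`. -/
noncomputable def ηconst (d n : ℕ) : ℝ :=
  max (((d : ℝ) + (n : ℝ) - 1) ^ 2 / 4) ((d : ℝ) + (n : ℝ) + 6) + 2

open Real Finset

section IntRep

variable {M : ℕ} [NeZero M]

lemma intCast_intRep (z : ZMod M) : ((intRep M z : ℤ) : ZMod M) = z := by
  unfold intRep
  split <;> simp [ZMod.natCast_val, ZMod.cast_id]

lemma intRep_injective : Function.Injective (intRep M) :=
  Function.LeftInverse.injective (g := Int.cast) intCast_intRep

lemma intRep_eq_zero_iff {z : ZMod M} : intRep M z = 0 ↔ z = 0 :=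
  ⟨fun h => by simpa [h] using (intCast_intRep z).symm, by rintro rfl; simp [intRep]⟩

lemma two_mul_abs_intRep_le (z : ZMod M) : 2 * |intRep M z| ≤ M := by
  have := ZMod.val_lt z
  unfold intRep
  split <;> rcases abs_cases (_ : ℤ) with ⟨h, _⟩ | ⟨h, _⟩ <;> rw [h] <;> omega

lemma card_abs_intRep_le (t : ℕ) : #{z : ZMod M | |intRep M z| ≤ t} ≤ 2 * t + 1 := by
  calc #{z : ZMod M | |intRep M z| ≤ t} ≤ #(Icc (-(t : ℤ)) t) := by
        refine card_le_card_of_injOn (intRep M) (fun z hz => ?_) intRep_injective.injOn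
        simp only [coe_filter, mem_univ, true_and, Set.mem_ofPred_eq] at hz
        simpa [abs_le] using hz
    _ = 2 * t + 1 := by simp; omega

end IntRep

lemma abs_two_pi_mul_div (M : ℕ) (k : ℤ) : |2 * π * k / M| = 2 * π * |(k : ℝ)| / M := by
  rw [abs_div, abs_mul, Nat.abs_cast, abs_of_pos two_pi_pos]

section PNorm

variable {d M : ℕ}

lemma abs_coord_le_pNorm (p : Fin d → ZMod M) (i : Fin d) :
    |2 * π * intRep M (p i) / M| ≤ pNorm M p := by
  rw [← Real.sqrt_sq_eq_abs]
  exact Real.sqrt_le_sqrt <|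
    single_le_sum (fun j _ => sq_nonneg (2 * π * intRep M (p j) / M)) (mem_univ i)

variable [NeZero M]

lemma two_pi_div_le_pNorm {p : Fin d → ZMod M} (hp : p ≠ 0) : 2 * π / M ≤ pNorm M p := by
  obtain ⟨i, hi⟩ := Function.ne_iff.mp hp
  have h1 : (1 : ℝ) ≤ |(intRep M (p i) : ℝ)| := by
    exact_mod_cast Int.one_le_abs (intRep_eq_zero_iff.not.mpr hi)
  refine le_trans ?_ (abs_coord_le_pNorm p i)
  rw [abs_two_pi_mul_div]
  exact div_le_div_of_nonneg_right (le_mul_of_one_le_right two_pi_pos.le h1) (Nat.cast_nonneg _)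

lemma pNorm_pos {p : Fin d → ZMod M} (hp : p ≠ 0) : 0 < pNorm M p :=
  lt_of_lt_of_le (by have := NeZero.pos M; positivity) (two_pi_div_le_pNorm hp)

lemma pNorm_le_pi_mul_sqrt (p : Fin d → ZMod M) : pNorm M p ≤ π * √d := by
  have hM : (0 : ℝ) < M := by exact_mod_cast NeZero.pos M
  have hcoord : ∀ i, (2 * π * intRep M (p i) / M) ^ 2 ≤ π ^ 2 := by
    intro i
    rw [← sq_abs, abs_two_pi_mul_div]
    have : 2 * |(intRep M (p i) : ℝ)| ≤ M := by exact_mod_cast two_mul_abs_intRep_le (p i)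
    gcongr
    rw [div_le_iff₀ hM]
    nlinarith [pi_pos]
  calc pNorm M p ≤ √(∑ _i : Fin d, π ^ 2) := Real.sqrt_le_sqrt (sum_le_sum fun i _ => hcoord i)
    _ = π * √d := by
      rw [sum_const, card_univ, Fintype.card_fin, nsmul_eq_mul, Real.sqrt_mul (by positivity),
        Real.sqrt_sq pi_pos.le, mul_comm]

end PNorm

section AnnIdx

variable {L : ℕ} {r : ℝ}

lemma bddAbove_setOf_lt_pi_mul_zpow (hL : 1 < L) (hr : 0 < r) :
    BddAbove {j : ℕ | r < π * (L : ℝ) ^ (1 - (j : ℤ))} := by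
  have hL' : (1 : ℝ) < L := by exact_mod_cast hL
  obtain ⟨J, hJ⟩ := pow_unbounded_of_one_lt (π / r) hL'
  refine ⟨J, fun j (hj : r < π * (L : ℝ) ^ (1 - (j : ℤ))) => ?_⟩
  by_contra! hJj
  have : (L : ℝ) ^ (1 - (j : ℤ)) ≤ ((L : ℝ) ^ J)⁻¹ := by
    rw [← zpow_natCast, ← zpow_neg]
    exact zpow_le_zpow_right₀ hL'.le (by omega)
  rw [div_lt_iff₀ hr] at hJ
  have hpos : (0 : ℝ) < (L : ℝ) ^ J := by positivity
  have : π * (L : ℝ) ^ (1 - (j : ℤ)) * (L : ℝ) ^ J ≤ π := by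
    calc _ ≤ π * ((L : ℝ) ^ J)⁻¹ * (L : ℝ) ^ J := by gcongr
      _ = π := by field_simp
  nlinarith

lemma pi_mul_zpow_neg_annIdx_le (hL : 1 < L) (hr : 0 < r) :
    π * (L : ℝ) ^ (-(annIdx L r : ℤ)) ≤ r := by
  have hnot : annIdx L r + 1 ∉ {j : ℕ | r < π * (L : ℝ) ^ (1 - (j : ℤ))} := fun hmem =>
    (le_csSup (bddAbove_setOf_lt_pi_mul_zpow hL hr) hmem).not_gt (Nat.lt_succ_self _)
  simpa using hnot

lemma lt_pi_mul_zpow_one_sub_annIdx (hL : 1 < L) (hr : 0 < r) (hj : 0 < annIdx L r) :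
    r < π * (L : ℝ) ^ (1 - (annIdx L r : ℤ)) := by
  have hne : {j : ℕ | r < π * (L : ℝ) ^ (1 - (j : ℤ))}.Nonempty := by
    by_contra hne
    rw [Set.not_nonempty_iff_eq_empty] at hne
    simp [annIdx, hne] at hj
  exact Nat.sSup_mem hne (bddAbove_setOf_lt_pi_mul_zpow hL hr)

lemma annIdx_le_of_pi_mul_zpow_neg_le (hL : 1 < L) (hr : 0 < r) {N : ℕ}
    (hN : π * (L : ℝ) ^ (-(N : ℤ)) ≤ r) : annIdx L r ≤ N := by
  by_contra! hNj
  have := lt_pi_mul_zpow_one_sub_annIdx hL hr (by omega)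
  have : (L : ℝ) ^ (1 - (annIdx L r : ℤ)) ≤ (L : ℝ) ^ (-(N : ℤ)) :=
    zpow_le_zpow_right₀ (by exact_mod_cast hL.le) (by omega)
  nlinarith [pi_pos]

end AnnIdx

section Fibers

variable {d L N : ℕ} [NeZero (L ^ N)]

lemma annIdx_pNorm_le (hL : 1 < L) {p : Fin d → ZMod (L ^ N)} (hp : p ≠ 0) :
    annIdx L (pNorm (L ^ N) p) ≤ N := by
  refine annIdx_le_of_pi_mul_zpow_neg_le hL (pNorm_pos hp) (le_trans ?_ (two_pi_div_le_pNorm hp))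
  rw [zpow_neg, zpow_natCast, Nat.cast_pow, ← div_eq_mul_inv]
  gcongr
  linarith [pi_pos]

lemma abs_intRep_le_of_annIdx (hL : 1 < L) {p : Fin d → ZMod (L ^ N)} (hp : p ≠ 0) (i : Fin d) :
    |intRep (L ^ N) (p i)| ≤ ((L ^ (N + 1 - annIdx L (pNorm (L ^ N) p)) : ℕ) : ℤ) := by
  have hk := two_mul_abs_intRep_le (p i)
  obtain ⟨j, hj⟩ : ∃ j, annIdx L (pNorm (L ^ N) p) = j := ⟨_, rfl⟩
  rw [hj]
  rcases Nat.eq_zero_or_pos j with rfl | hj0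
  · have : ((L ^ N : ℕ) : ℤ) ≤ ((L ^ (N + 1 - 0) : ℕ) : ℤ) := by
      exact_mod_cast Nat.pow_le_pow_right (by omega) (by omega)
    omega
  · have hjN : j ≤ N := hj ▸ annIdx_pNorm_le hL hp
    have hpow : (L : ℝ) ^ (1 - (j : ℤ)) * ((L ^ N : ℕ) : ℝ) = ((L ^ (N + 1 - j) : ℕ) : ℝ) := by
      rw [Nat.cast_pow, Nat.cast_pow, ← zpow_natCast, ← zpow_natCast,
        ← zpow_add₀ (by exact_mod_cast (by omega : L ≠ 0))]
      congr 1
      omega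
    have hlt := (abs_coord_le_pNorm p i).trans_lt
      (hj ▸ lt_pi_mul_zpow_one_sub_annIdx hL (pNorm_pos hp) (hj ▸ hj0))
    rw [abs_two_pi_mul_div, div_lt_iff₀ (by exact_mod_cast NeZero.pos (L ^ N)), mul_assoc π,
      hpow] at hlt
    have : 2 * |(intRep (L ^ N) (p i) : ℝ)| < ((L ^ (N + 1 - j) : ℕ) : ℝ) := by nlinarith [pi_pos]
    have : 2 * |intRep (L ^ N) (p i)| < ((L ^ (N + 1 - j) : ℕ) : ℤ) := by exact_mod_cast this
    omega

lemma card_annIdx_fiber_le (hL : 1 < L) (j : ℕ) :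
    #{p : Fin d → ZMod (L ^ N) | p ≠ 0 ∧ annIdx L (pNorm (L ^ N) p) = j} ≤
      (3 * L ^ (N + 1 - j)) ^ d := by
  set t := L ^ (N + 1 - j)
  have ht : 1 ≤ t := Nat.one_le_pow _ _ (by omega)
  calc #{p : Fin d → ZMod (L ^ N) | p ≠ 0 ∧ annIdx L (pNorm (L ^ N) p) = j}
      ≤ #(Fintype.piFinset fun _ : Fin d => ({z | |intRep (L ^ N) z| ≤ t} : Finset _)) := by
        refine card_le_card fun p hp => ?_
        simp only [mem_filter, mem_univ, true_and] at hp
        simp only [Fintype.mem_piFinset, mem_filter, mem_univ, true_and]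
        intro i
        have := abs_intRep_le_of_annIdx hL hp.1 i
        rwa [hp.2] at this
    _ ≤ (2 * t + 1) ^ d := by
        rw [Fintype.card_piFinset, prod_const, card_univ, Fintype.card_fin]
        exact Nat.pow_le_pow_left (card_abs_intRep_le t) d
    _ ≤ (3 * t) ^ d := Nat.pow_le_pow_left (by omega) d

end Fibers

lemma zpow_sub_two_le_div (n : ℕ) {a b r : ℝ} (ha : 0 < a) (har : a ≤ r) (hrb : r ≤ b) :
    r ^ ((n : ℤ) - 2) ≤ b ^ n / a ^ 2 := by
  have hr : 0 < r := ha.trans_le har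
  rw [zpow_sub₀ hr.ne', zpow_natCast, zpow_two, ← sq]
  exact div_le_div₀ (pow_nonneg (hr.le.trans hrb) n) (pow_le_pow_left₀ hr.le hrb n) (by positivity)
    (pow_le_pow_left₀ ha.le har 2)

section PointBound

variable {d L N : ℕ} [NeZero (L ^ N)]

lemma pNorm_le_pi_mul_sqrt_mul_zpow (hd : 1 ≤ d) (hL : 1 < L) {p : Fin d → ZMod (L ^ N)}
    (hp : p ≠ 0) : pNorm (L ^ N) p ≤ π * √d * (L : ℝ) ^ (1 - (annIdx L (pNorm (L ^ N) p) : ℤ)) := by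
  have hL' : (1 : ℝ) ≤ L := by exact_mod_cast hL.le
  have hsqrt : (1 : ℝ) ≤ √d := Real.one_le_sqrt.mpr (by exact_mod_cast hd)
  rcases Nat.eq_zero_or_pos (annIdx L (pNorm (L ^ N) p)) with hj | hj
  · rw [hj, Nat.cast_zero, sub_zero, zpow_one]
    exact (pNorm_le_pi_mul_sqrt p).trans (le_mul_of_one_le_right (by positivity) hL')
  · refine (lt_pi_mul_zpow_one_sub_annIdx hL (pNorm_pos hp) hj).le.trans ?_
    gcongr
    exact le_mul_of_one_le_right pi_pos.le hsqrt

lemma pNorm_zpow_sub_two_le (hd : 1 ≤ d) (hL : 1 < L) (n : ℕ) {p : Fin d → ZMod (L ^ N)}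
    (hp : p ≠ 0) :
    pNorm (L ^ N) p ^ ((n : ℤ) - 2) ≤
      (π * √d) ^ n / π ^ 2 *
        (L : ℝ) ^ ((n : ℤ) - annIdx L (pNorm (L ^ N) p) * ((n : ℤ) - 2)) := by
  set j := annIdx L (pNorm (L ^ N) p)
  have hL0 : (0 : ℝ) < L := by exact_mod_cast (by omega : 0 < L)
  have hpow : (L : ℝ) ^ ((n : ℤ) - j * ((n : ℤ) - 2)) =
      ((L : ℝ) ^ (1 - (j : ℤ))) ^ n / ((L : ℝ) ^ (-(j : ℤ))) ^ 2 := by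
    rw [← zpow_natCast, ← zpow_natCast _ 2, ← zpow_mul, ← zpow_mul, ← zpow_sub₀ hL0.ne']
    congr 1
    push_cast
    ring
  calc pNorm (L ^ N) p ^ ((n : ℤ) - 2)
      ≤ (π * √d * (L : ℝ) ^ (1 - (j : ℤ))) ^ n / (π * (L : ℝ) ^ (-(j : ℤ))) ^ 2 :=
        zpow_sub_two_le_div n (mul_pos pi_pos (zpow_pos hL0 _))
          (pi_mul_zpow_neg_annIdx_le hL (pNorm_pos hp))
          (pNorm_le_pi_mul_sqrt_mul_zpow hd hL hp)
    _ = _ := by rw [hpow]; ring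

end PointBound

lemma inv_pow_mul_pow_mul_zpow_eq {L : ℕ} (hL : L ≠ 0) (d n : ℕ) {N j : ℕ} (hj : j ≤ N + 1) :
    ((L : ℝ) ^ (d * N))⁻¹ * (3 * (L : ℝ) ^ (N + 1 - j)) ^ d *
        (L : ℝ) ^ ((n : ℤ) - j * ((n : ℤ) - 2)) =
      3 ^ d * (L : ℝ) ^ ((d : ℤ) + n) * (L : ℝ) ^ (-(j : ℤ) * ((d : ℤ) + n - 2)) := by
  have hL0 : (L : ℝ) ≠ 0 := by exact_mod_cast hL
  calc _ = 3 ^ d * ((L : ℝ) ^ (-((d * N : ℕ) : ℤ)) * (L : ℝ) ^ (((N + 1 - j) * d : ℕ) : ℤ) *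
        (L : ℝ) ^ ((n : ℤ) - j * ((n : ℤ) - 2))) := by
        rw [zpow_neg, zpow_natCast, zpow_natCast, pow_mul]
        ring
    _ = _ := by
        rw [mul_assoc (3 ^ d : ℝ), ← zpow_add₀ hL0, ← zpow_add₀ hL0, ← zpow_add₀ hL0]
        congr 2
        push_cast [hj]
        ring

theorem sum_torus_le_sum_annuli {d L N : ℕ} [NeZero (L ^ N)] (hd : 1 ≤ d) (hL : 1 < L) (n : ℕ)
    (W : ℕ → ℝ) (hW : ∀ j, 0 ≤ W j) :
    ((L : ℝ) ^ (d * N))⁻¹ *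
        ∑ p ∈ univ.filter (fun p : Fin d → ZMod (L ^ N) => p ≠ 0),
          W (annIdx L (pNorm (L ^ N) p)) * pNorm (L ^ N) p ^ ((n : ℤ) - 2) ≤
      3 ^ d * ((π * √d) ^ n / π ^ 2) * (L : ℝ) ^ ((d : ℤ) + n) *
        ∑ j ∈ range (N + 1), W j * (L : ℝ) ^ (-(j : ℤ) * ((d : ℤ) + n - 2)) := by
  set B := (π * √d) ^ n / π ^ 2
  have hmaps : ∀ p ∈ univ.filter (fun p : Fin d → ZMod (L ^ N) => p ≠ 0),
      annIdx L (pNorm (L ^ N) p) ∈ range (N + 1) := fun p hp =>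
    mem_range_succ_iff.mpr (annIdx_pNorm_le hL (mem_filter.mp hp).2)
  rw [← sum_fiberwise_of_maps_to hmaps, mul_sum, mul_sum]
  refine sum_le_sum fun j hj => ?_
  rw [filter_filter]
  set fiber : Finset (Fin d → ZMod (L ^ N)) := {p | p ≠ 0 ∧ annIdx L (pNorm (L ^ N) p) = j}
  have hpoint : ∀ p ∈ fiber, W (annIdx L (pNorm (L ^ N) p)) * pNorm (L ^ N) p ^ ((n : ℤ) - 2) ≤
      W j * (B * (L : ℝ) ^ ((n : ℤ) - j * ((n : ℤ) - 2))) := by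
    intro p hp
    obtain ⟨hp0, hpj⟩ := (mem_filter.mp hp).2
    have := pNorm_zpow_sub_two_le hd hL n hp0
    rw [hpj] at this ⊢
    exact mul_le_mul_of_nonneg_left this (hW j)
  have hcard : (#fiber : ℝ) ≤ (3 * (L : ℝ) ^ (N + 1 - j)) ^ d := by
    exact_mod_cast card_annIdx_fiber_le hL j
  calc ((L : ℝ) ^ (d * N))⁻¹ *
        ∑ p ∈ fiber, W (annIdx L (pNorm (L ^ N) p)) * pNorm (L ^ N) p ^ ((n : ℤ) - 2)
      ≤ ((L : ℝ) ^ (d * N))⁻¹ *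
          (#fiber * (W j * (B * (L : ℝ) ^ ((n : ℤ) - j * ((n : ℤ) - 2))))) := by
        rw [← nsmul_eq_mul]
        gcongr
        exact sum_le_card_nsmul _ _ _ hpoint
    _ ≤ ((L : ℝ) ^ (d * N))⁻¹ * ((3 * (L : ℝ) ^ (N + 1 - j)) ^ d *
          (W j * (B * (L : ℝ) ^ ((n : ℤ) - j * ((n : ℤ) - 2))))) := by
        have : 0 < (L : ℝ) := by exact_mod_cast (by omega : 0 < L)
        gcongr
        exact mul_nonneg (hW j) (mul_nonneg (by positivity) (zpow_pos this _).le)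
    _ = B * W j * (((L : ℝ) ^ (d * N))⁻¹ * (3 * (L : ℝ) ^ (N + 1 - j)) ^ d *
          (L : ℝ) ^ ((n : ℤ) - j * ((n : ℤ) - 2))) := by ring
    _ = 3 ^ d * B * (L : ℝ) ^ ((d : ℤ) + n) * (W j * (L : ℝ) ^ (-(j : ℤ) * ((d : ℤ) + n - 2))) := by
        rw [inv_pow_mul_pow_mul_zpow_eq (by omega) d n (by rw [mem_range] at hj; omega)]
        ring

section Steps

variable {c : ℝ} {L k j : ℕ}

lemma Mstep_nonneg (hc : 0 ≤ c) : 0 ≤ Mstep c L k j := by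
  unfold Mstep
  split <;> positivity

lemma MstepT_nonneg (hc : 0 ≤ c) : 0 ≤ MstepT c L k j := by
  unfold MstepT
  split <;> positivity

lemma MstepT_le_mul_Mstep (hc : 1 ≤ c) (hL : 1 ≤ L) :
    MstepT c L k j ≤ c * (L : ℝ) ^ 8 * Mstep c L k j := by
  have hL' : (1 : ℝ) ≤ L := by exact_mod_cast hL
  have hcL : 1 ≤ c * (L : ℝ) ^ 8 := one_le_mul_of_one_le_of_one_le hc (one_le_pow₀ hL')
  unfold Mstep MstepT
  split
  · rw [mul_one]
    exact mul_le_of_le_one_right (by positivity) (zpow_le_one_of_nonpos₀ hL' (by omega))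
  · exact le_mul_of_one_le_left (by positivity) hcL

lemma Mstep_le_MstepT (hc : 1 ≤ c) (hL : 1 ≤ L) (hj : j ≤ k) : Mstep c L k j ≤ MstepT c L k j := by
  have hL' : (1 : ℝ) ≤ L := by exact_mod_cast hL
  unfold Mstep MstepT
  split
  · obtain rfl : k = j := by omega
    rw [sub_self, mul_zero, zpow_zero, mul_one]
    exact one_le_mul_of_one_le_of_one_le hc (one_le_pow₀ hL')
  · exact le_rfl

lemma Mstep_mul_MstepT_of_le (h : k ≤ j) :
    Mstep c L k j * MstepT c L k j = c * (L : ℝ) ^ 8 * (L : ℝ) ^ (4 * ((k : ℤ) - j)) := by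
  simp [Mstep, MstepT, h]

lemma Mstep_mul_MstepT_of_lt (h : j < k) :
    Mstep c L k j * MstepT c L k j = (c ^ 2) ^ (k - j) * ((L : ℝ) ^ ((k - j) * (k - j + 1)))⁻¹ := by
  have htwo : (k - j) * (k - j + 1) = (k - j) * (k - j + 1) / 2 * 2 :=
    (Nat.div_mul_cancel (Nat.even_mul_succ_self _).two_dvd).symm
  simp only [Mstep, MstepT, if_neg h.not_ge]
  conv_rhs => rw [htwo, pow_mul]
  ring

end Steps

lemma sum_inv_three_pow_le (s : Finset ℕ) : ∑ i ∈ s, (3 : ℝ)⁻¹ ^ i ≤ 3 / 2 := by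
  have hsum : Summable fun i : ℕ => (3 : ℝ)⁻¹ ^ i :=
    summable_geometric_of_lt_one (by norm_num) (by norm_num)
  calc ∑ i ∈ s, (3 : ℝ)⁻¹ ^ i ≤ ∑' i, (3 : ℝ)⁻¹ ^ i := hsum.sum_le_tsum s fun _ _ => by positivity
    _ = 3 / 2 := by rw [tsum_geometric_of_lt_one (by norm_num) (by norm_num)]; norm_num

lemma exists_sum_pow_mul_rpow_le {q : ℝ} (hq : 1 ≤ q) (a : ℝ) :
    ∃ C, 0 ≤ C ∧ ∀ x : ℝ, 3 ≤ x → ∀ s : Finset ℕ,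
      ∑ m ∈ s, q ^ m * x ^ ((m : ℝ) * (a - m)) ≤ C * x ^ (a ^ 2 / 4) := by
  obtain ⟨B, hB⟩ := pow_unbounded_of_one_lt q (by norm_num : (1 : ℝ) < 3)
  -- Each term is at most `q^m x^{a²/4}`; past `m₀` the factor `x^{a-m} ≤ 3^{-B-1}` beats `q < 3^B`,
  -- so those terms decay like `3⁻ᵐ`.
  set m₀ := ⌈a⌉₊ + B
  refine ⟨(m₀ + 1) * q ^ m₀ + 2, by positivity, fun x hx s => ?_⟩
  have hx1 : (1 : ℝ) ≤ x := by linarith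
  have hxE : 1 ≤ x ^ (a ^ 2 / 4) := Real.one_le_rpow hx1 (by positivity)
  have hhead : ∀ m ≤ m₀, q ^ m * x ^ ((m : ℝ) * (a - m)) ≤ q ^ m₀ * x ^ (a ^ 2 / 4) := by
    intro m hm
    gcongr
    nlinarith [sq_nonneg ((m : ℝ) - a / 2)]
  have htail : ∀ m, m₀ < m → q ^ m * x ^ ((m : ℝ) * (a - m)) ≤ (3 : ℝ)⁻¹ ^ m := by
    intro m hm
    have hma : a - m ≤ -((B + 1 : ℕ) : ℝ) := by
      have : (m₀ : ℝ) + 1 ≤ m := by exact_mod_cast hm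
      have := Nat.le_ceil a
      push_cast [m₀] at *
      linarith
    have hxpow : x ^ (a - m) ≤ ((3 : ℝ) ^ (B + 1))⁻¹ := by
      calc x ^ (a - m) ≤ x ^ (-((B + 1 : ℕ) : ℝ)) := Real.rpow_le_rpow_of_exponent_le hx1 hma
        _ = (x ^ (B + 1))⁻¹ := by rw [Real.rpow_neg (by linarith), Real.rpow_natCast]
        _ ≤ _ := by gcongr
    rw [mul_comm (m : ℝ), Real.rpow_mul_natCast (by linarith), ← mul_pow]
    gcongr
    calc q * x ^ (a - m) ≤ 3 ^ B * ((3 : ℝ) ^ (B + 1))⁻¹ := by gcongr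
      _ = 3⁻¹ := by rw [pow_succ, mul_inv, ← mul_assoc, mul_inv_cancel₀ (by positivity), one_mul]
  rw [← sum_filter_add_sum_filter_not s (· ≤ m₀)]
  have hhead_sum : ∑ m ∈ s with m ≤ m₀, q ^ m * x ^ ((m : ℝ) * (a - m)) ≤
      (m₀ + 1) * q ^ m₀ * x ^ (a ^ 2 / 4) := by
    calc _ ≤ #(s.filter (· ≤ m₀)) • (q ^ m₀ * x ^ (a ^ 2 / 4)) :=
          sum_le_card_nsmul _ _ _ fun m hm => hhead m (mem_filter.mp hm).2
      _ ≤ _ := by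
          rw [nsmul_eq_mul, mul_assoc]
          gcongr
          have : s.filter (· ≤ m₀) ⊆ range (m₀ + 1) := fun m hm =>
            mem_range_succ_iff.mpr (mem_filter.mp hm).2
          exact_mod_cast (card_le_card this).trans (card_range _).le
  have htail_sum : ∑ m ∈ s with ¬m ≤ m₀, q ^ m * x ^ ((m : ℝ) * (a - m)) ≤ 3 / 2 :=
    (sum_le_sum fun m hm => htail m (not_le.mp (mem_filter.mp hm).2)).trans
      (sum_inv_three_pow_le _)
  nlinarith

section AnnulusSums

variable {c : ℝ} {L : ℕ}

lemma sum_range_Mstep_mul_MstepT_mul_zpow (hL : 0 < L) (σ : ℤ) (k : ℕ) :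
    ∑ j ∈ range k, Mstep c L k j * MstepT c L k j * (L : ℝ) ^ (-(j : ℤ) * σ) =
      (L : ℝ) ^ (-(k : ℝ) * σ) *
        ∑ m ∈ Icc 1 k, (c ^ 2) ^ m * (L : ℝ) ^ ((m : ℝ) * (σ - 1 - m)) := by
  have hL' : (0 : ℝ) < L := by exact_mod_cast hL
  rw [mul_sum]
  refine sum_nbij' (k - ·) (k - ·) ?_ ?_ ?_ ?_ fun j hj => ?_
  all_goals try (intro a ha; simp only [mem_range, mem_Icc] at ha ⊢; omega)
  rw [mem_range] at hj
  have hexp : -(((k - j) * (k - j + 1) : ℕ) : ℝ) + ((-(j : ℤ) * σ : ℤ) : ℝ) =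
      -(k : ℝ) * σ + ((k - j : ℕ) : ℝ) * (σ - 1 - ((k - j : ℕ) : ℝ)) := by
    push_cast [hj.le]
    ring
  calc Mstep c L k j * MstepT c L k j * (L : ℝ) ^ (-(j : ℤ) * σ)
      = (c ^ 2) ^ (k - j) * ((L : ℝ) ^ (-(((k - j) * (k - j + 1) : ℕ) : ℝ)) *
          (L : ℝ) ^ ((-(j : ℤ) * σ : ℤ) : ℝ)) := by
        rw [Mstep_mul_MstepT_of_lt hj, Real.rpow_neg hL'.le, Real.rpow_natCast, Real.rpow_intCast]
        ring
    _ = _ := by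
        rw [← Real.rpow_add hL', hexp, Real.rpow_add hL']
        ring

lemma sum_Ico_Mstep_mul_MstepT_mul_zpow_le (hc : 0 ≤ c) (hL : 3 ≤ L) {σ : ℤ} (hσ : -3 ≤ σ)
    (k N : ℕ) :
    ∑ j ∈ Ico k (N + 1), Mstep c L k j * MstepT c L k j * (L : ℝ) ^ (-(j : ℤ) * σ) ≤
      3 / 2 * c * (L : ℝ) ^ ((8 : ℤ) - k * σ) := by
  have hL' : (3 : ℝ) ≤ L := by exact_mod_cast hL
  have hL0 : (L : ℝ) ≠ 0 := by positivity
  have hterm : ∀ i : ℕ, Mstep c L k (k + i) * MstepT c L k (k + i) *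
      (L : ℝ) ^ (-((k + i : ℕ) : ℤ) * σ) ≤ c * (L : ℝ) ^ ((8 : ℤ) - k * σ) * (3 : ℝ)⁻¹ ^ i := by
    intro i
    rw [Mstep_mul_MstepT_of_le (by omega), ← zpow_natCast (L : ℝ) 8, mul_assoc c, mul_assoc c,
      ← zpow_add₀ hL0, ← zpow_add₀ hL0,
      show (((8 : ℕ) : ℤ) + 4 * ((k : ℤ) - ((k + i : ℕ) : ℤ)) + -((k + i : ℕ) : ℤ) * σ) =
        ((8 : ℤ) - k * σ) + -(i : ℤ) * (σ + 4) by push_cast; ring,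
      zpow_add₀ hL0, ← mul_assoc]
    gcongr
    calc (L : ℝ) ^ (-(i : ℤ) * (σ + 4)) ≤ (L : ℝ) ^ (-(i : ℤ)) :=
          zpow_le_zpow_right₀ (by linarith) (by nlinarith)
      _ = ((L : ℝ) ^ i)⁻¹ := by rw [zpow_neg, zpow_natCast]
      _ ≤ ((3 : ℝ) ^ i)⁻¹ := by gcongr
      _ = (3 : ℝ)⁻¹ ^ i := (inv_pow _ _).symm
  rw [sum_Ico_eq_sum_range]
  calc _ ≤ ∑ i ∈ range (N + 1 - k), c * (L : ℝ) ^ ((8 : ℤ) - k * σ) * (3 : ℝ)⁻¹ ^ i :=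
        sum_le_sum fun i _ => hterm i
    _ = c * (L : ℝ) ^ ((8 : ℤ) - k * σ) * ∑ i ∈ range (N + 1 - k), (3 : ℝ)⁻¹ ^ i :=
        (mul_sum _ _ _).symm
    _ ≤ c * (L : ℝ) ^ ((8 : ℤ) - k * σ) * (3 / 2) := by gcongr; exact sum_inv_three_pow_le _
    _ = _ := by ring

lemma exists_sum_Mstep_mul_MstepT_mul_zpow_le (hc : 1 ≤ c) {σ : ℤ} (hσ : -3 ≤ σ) :
    ∃ C, 0 < C ∧ ∀ L : ℕ, 3 ≤ L → ∀ N k : ℕ, k ≤ N →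
      ∑ j ∈ range (N + 1), Mstep c L k j * MstepT c L k j * (L : ℝ) ^ (-(j : ℤ) * σ) ≤
        C * (L : ℝ) ^ (max (((σ : ℝ) - 1) ^ 2 / 4) 8 - (k : ℝ) * σ) := by
  obtain ⟨C₀, hC₀, hlow⟩ := exists_sum_pow_mul_rpow_le (one_le_pow₀ hc : 1 ≤ c ^ 2) (σ - 1)
  refine ⟨C₀ + 2 * c, by linarith, fun L hL N k hk => ?_⟩
  have hL' : (3 : ℝ) ≤ L := by exact_mod_cast hL
  have hL0 : (0 : ℝ) < L := by linarith
  have hlow' : ∑ j ∈ range k, Mstep c L k j * MstepT c L k j * (L : ℝ) ^ (-(j : ℤ) * σ) ≤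
      C₀ * (L : ℝ) ^ (max (((σ : ℝ) - 1) ^ 2 / 4) 8 - (k : ℝ) * σ) := by
    rw [sum_range_Mstep_mul_MstepT_mul_zpow (by omega)]
    calc _ ≤ (L : ℝ) ^ (-(k : ℝ) * σ) * (C₀ * (L : ℝ) ^ (((σ : ℝ) - 1) ^ 2 / 4)) := by
          gcongr
          exact hlow L hL' _
      _ = C₀ * (L : ℝ) ^ (((σ : ℝ) - 1) ^ 2 / 4 - (k : ℝ) * σ) := by
          rw [show ((σ : ℝ) - 1) ^ 2 / 4 - k * σ = -(k : ℝ) * σ + ((σ : ℝ) - 1) ^ 2 / 4 by ring,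
            Real.rpow_add hL0]
          ring
      _ ≤ _ := mul_le_mul_of_nonneg_left (Real.rpow_le_rpow_of_exponent_le (by linarith)
          (sub_le_sub_right (le_max_left _ _) _)) hC₀
  have hhigh : ∑ j ∈ Ico k (N + 1), Mstep c L k j * MstepT c L k j * (L : ℝ) ^ (-(j : ℤ) * σ) ≤
      2 * c * (L : ℝ) ^ (max (((σ : ℝ) - 1) ^ 2 / 4) 8 - (k : ℝ) * σ) := by
    calc _ ≤ 3 / 2 * c * (L : ℝ) ^ ((8 : ℤ) - k * σ) :=
          sum_Ico_Mstep_mul_MstepT_mul_zpow_le (by linarith) hL hσ k N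
      _ = 3 / 2 * c * (L : ℝ) ^ ((8 : ℝ) - k * σ) := by
          rw [← Real.rpow_intCast]
          push_cast
          rfl
      _ ≤ _ := mul_le_mul (by linarith) (Real.rpow_le_rpow_of_exponent_le (by linarith)
          (sub_le_sub_right (le_max_right _ _) _)) (by positivity) (by positivity)
  rw [← sum_range_add_sum_Ico _ (by omega : k ≤ N + 1)]
  linarith

end AnnulusSums

lemma ηconst_eq (d n : ℕ) :
    ηconst d n = d + n + max ((((d : ℝ) + n - 2) - 1) ^ 2 / 4) 8 := by
  rw [ηconst, ← max_add_add_right, ← max_add_add_left]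
  congr 1 <;> ring

theorem exists_torus_sum_le (d n : ℕ) (hd : 1 ≤ d) {c : ℝ} (hc : 1 ≤ c) :
    ∃ C, 0 < C ∧ ∀ L N : ℕ, 3 ≤ L → ∀ [NeZero (L ^ N)], ∀ k ≤ N, ∀ a : ℝ, 0 ≤ a →
      ∀ W : ℕ → ℝ, (∀ j, 0 ≤ W j) → (∀ j ≤ N, W j ≤ a * (Mstep c L k j * MstepT c L k j)) →
        ((L : ℝ) ^ (d * N))⁻¹ *
            ∑ p ∈ univ.filter (fun p : Fin d → ZMod (L ^ N) => p ≠ 0),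
              W (annIdx L (pNorm (L ^ N) p)) * pNorm (L ^ N) p ^ ((n : ℤ) - 2) ≤
          a * C * (L : ℝ) ^ (ηconst d n - k * ((d : ℝ) + n - 2)) := by
  set σ : ℤ := (d : ℤ) + n - 2 with hσ
  obtain ⟨C, hC, hsum⟩ := exists_sum_Mstep_mul_MstepT_mul_zpow_le hc (σ := σ) (by omega)
  set K := 3 ^ d * ((π * √d) ^ n / π ^ 2)
  refine ⟨K * C, by positivity, fun L N hL _ k hk a ha W hW hWle => ?_⟩
  have hL0 : (0 : ℝ) < L := by exact_mod_cast (by omega : 0 < L)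
  have hexp : (((d : ℤ) + n : ℤ) : ℝ) + (max (((σ : ℝ) - 1) ^ 2 / 4) 8 - (k : ℝ) * σ) =
      ηconst d n - k * ((d : ℝ) + n - 2) := by
    rw [ηconst_eq, hσ]
    push_cast
    ring
  calc _ ≤ K * (L : ℝ) ^ ((d : ℤ) + n) * ∑ j ∈ range (N + 1), W j * (L : ℝ) ^ (-(j : ℤ) * σ) :=
        sum_torus_le_sum_annuli hd (by omega) n W hW
    _ ≤ K * (L : ℝ) ^ ((d : ℤ) + n) *
          (a * ∑ j ∈ range (N + 1), Mstep c L k j * MstepT c L k j * (L : ℝ) ^ (-(j : ℤ) * σ)) := by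
        gcongr _ * ?_
        rw [mul_sum]
        refine sum_le_sum fun j hj => ?_
        rw [← mul_assoc]
        exact mul_le_mul_of_nonneg_right (hWle j (mem_range_succ_iff.mp hj)) (zpow_pos hL0 _).le
    _ ≤ K * (L : ℝ) ^ ((d : ℤ) + n) *
          (a * (C * (L : ℝ) ^ (max (((σ : ℝ) - 1) ^ 2 / 4) 8 - (k : ℝ) * σ))) := by
        gcongr
        exact hsum L hL N k hk
    _ = a * (K * C) * (L : ℝ) ^ (ηconst d n - k * ((d : ℝ) + n - 2)) := by
        rw [← hexp, Real.rpow_add hL0, Real.rpow_intCast]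
        ring

/-- **Lemma 4.3** (summation estimates over the dual torus): for every `n ≥ 0` and `c ≥ 1`
there is a constant `c'` (depending only on `c`, `n`, `d`) such that, with
`η = max(¼(d+n-1)², d+n+6) + 2`, for all `L ≥ 3`, `N ≥ 1` and `k = 1,…,N+1`:
(a) `L^{-dN} ∑_{p≠0} M_{k-1}(p) M̃_{k-1}(p) |p|^{n-2} ≤ c' L^η L^{-(k-1)(d+n-2)}`;
(b) `L^{-dN} ∑_{p≠0} M̃_{k-1}(p)² |p|^{n-2} ≤ c c' L^{η+8} L^{-(k-1)(d+n-2)}`;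
(c) `L^{-dN} ∑_{p≠0} M_N(p)² |p|^{n-2} ≤ c' L^η L^{-N(d+n-2)}`. -/
theorem statement18
    (d n : ℕ) (hd : 1 ≤ d) (c : ℝ) (hc : 1 ≤ c) :
    ∃ c' : ℝ, 0 < c' ∧
      ∀ L Nn : ℕ, Odd L → 3 ≤ L → 1 ≤ Nn → ∀ [NeZero (L ^ Nn)],
        ∀ k ∈ Finset.Icc 1 (Nn + 1),
        -- (a)
        (((L : ℝ) ^ (d * Nn))⁻¹ *
            ∑ p ∈ Finset.univ.filter (fun p : Fin d → ZMod (L ^ Nn) => p ≠ 0),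
              Mstep c L (k - 1) (annIdx L (pNorm (L ^ Nn) p)) *
                MstepT c L (k - 1) (annIdx L (pNorm (L ^ Nn) p)) *
                pNorm (L ^ Nn) p ^ ((n : ℤ) - 2) ≤
          c' * (L : ℝ) ^ (ηconst d n - ((k : ℝ) - 1) * ((d : ℝ) + (n : ℝ) - 2))) ∧
        -- (b)
        (((L : ℝ) ^ (d * Nn))⁻¹ *
            ∑ p ∈ Finset.univ.filter (fun p : Fin d → ZMod (L ^ Nn) => p ≠ 0),
              MstepT c L (k - 1) (annIdx L (pNorm (L ^ Nn) p)) ^ 2 *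
                pNorm (L ^ Nn) p ^ ((n : ℤ) - 2) ≤
          c * c' * (L : ℝ) ^ (ηconst d n + 8 - ((k : ℝ) - 1) * ((d : ℝ) + (n : ℝ) - 2))) ∧
        -- (c)
        (((L : ℝ) ^ (d * Nn))⁻¹ *
            ∑ p ∈ Finset.univ.filter (fun p : Fin d → ZMod (L ^ Nn) => p ≠ 0),
              Mstep c L Nn (annIdx L (pNorm (L ^ Nn) p)) ^ 2 *
                pNorm (L ^ Nn) p ^ ((n : ℤ) - 2) ≤
          c' * (L : ℝ) ^ (ηconst d n - (Nn : ℝ) * ((d : ℝ) + (n : ℝ) - 2))) := by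
  obtain ⟨C, hC, hsum⟩ := exists_torus_sum_le d n hd hc
  refine ⟨C, hC, fun L N _ hL _ _ k hk => ?_⟩
  obtain ⟨hk1, hkN⟩ := mem_Icc.mp hk
  have hkR : ((k - 1 : ℕ) : ℝ) = k - 1 := by push_cast [hk1]; ring
  have hL1 : 1 ≤ L := by omega
  have hc0 : 0 ≤ c := by linarith
  have hMMT : ∀ k j, 0 ≤ Mstep c L k j * MstepT c L k j := fun k j =>
    mul_nonneg (Mstep_nonneg hc0) (MstepT_nonneg hc0)
  refine ⟨?_, ?_, ?_⟩
  · simpa [hkR] using hsum L N hL (k - 1) (by omega) 1 zero_le_one _ (hMMT (k - 1))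
      fun j _ => (one_mul _).ge
  · have hMT : ∀ j, MstepT c L (k - 1) j ^ 2 ≤
        c * (L : ℝ) ^ 8 * (Mstep c L (k - 1) j * MstepT c L (k - 1) j) := fun j => by
      rw [sq, ← mul_assoc]
      exact mul_le_mul_of_nonneg_right (MstepT_le_mul_Mstep hc hL1) (MstepT_nonneg hc0)
    calc _ ≤ c * (L : ℝ) ^ 8 * C * (L : ℝ) ^ (ηconst d n - ((k - 1 : ℕ) : ℝ) * ((d : ℝ) + n - 2)) :=
          hsum L N hL (k - 1) (by omega) _ (by positivity) _ (fun j => sq_nonneg _)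
            fun j _ => hMT j
      _ = _ := by
          rw [hkR, ← Real.rpow_natCast, mul_right_comm c, mul_assoc (c * C),
            ← Real.rpow_add (by positivity)]
          ring_nf
  · simpa using hsum L N hL N le_rfl 1 zero_le_one _ (fun j => sq_nonneg _)
      fun j hj => by
        rw [one_mul, sq]
        exact mul_le_mul_of_nonneg_left (Mstep_le_MstepT hc hL1 hj) (Mstep_nonneg hc0)

end FRD
end
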